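/- The loop L(I, G, T, A) is unsafe if and only if there exists a danger invariant for it. (Combination of soundness and completeness.) -/

import Mathlib

/-!
Soundness: from a state of `D`, follow the successors promised by the danger invariant; the
ranking `R` is positive on guarded states of `D` and strictly decreases, so the loop exits after
finitely many steps, in a state of `D` violating `A`.

Completeness: take for `D` the states from which some run exits the loop violating `A`, and for
`R` the length of a shortest such run. A guarded state of `D` needs at least one step, and its
successor along a shortest run has a strictly shorter one.
-/

section DangerInvariant

variable {X : Type*} (I G A : X → Prop) (T : X → X → Prop)

def ExitsUnsafelyIn (n : ℕ) (y : X) : Prop :=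
  ∃ x : ℕ → X, x 0 = y ∧ (∀ i < n, G (x i) ∧ T (x i) (x (i + 1))) ∧ ¬ G (x n) ∧ ¬ A (x n)

def IsDangerInvariant (D : X → Prop) (R : X → ℤ) : Prop :=
  (∃ x₀, I x₀ ∧ D x₀) ∧
    (∀ x, D x ∧ G x → R x > 0 ∧ ∃ x', T x x' ∧ D x' ∧ R x' < R x) ∧
    (∀ x, D x ∧ ¬ G x → ¬ A x)

variable {I G A T}

theorem exitsUnsafelyIn_zero {y : X} : ExitsUnsafelyIn G A T 0 y ↔ ¬ G y ∧ ¬ A y := by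
  constructor
  · rintro ⟨x, rfl, -, hG, hA⟩
    exact ⟨hG, hA⟩
  · rintro ⟨hG, hA⟩
    exact ⟨fun _ => y, rfl, by simp, hG, hA⟩

theorem exitsUnsafelyIn_succ {n : ℕ} {y : X} :
    ExitsUnsafelyIn G A T (n + 1) y ↔ G y ∧ ∃ y', T y y' ∧ ExitsUnsafelyIn G A T n y' := by
  constructor
  · rintro ⟨x, rfl, hstep, hG, hA⟩
    refine ⟨(hstep 0 n.succ_pos).1, x 1, (hstep 0 n.succ_pos).2, fun i => x (i + 1), rfl,
      fun i hi => hstep (i + 1) (Nat.succ_lt_succ hi), hG, hA⟩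
  · rintro ⟨hGy, y', hT, z, rfl, hstep, hG, hA⟩
    refine ⟨fun | 0 => y | i + 1 => z i, rfl, ?_, hG, hA⟩
    rintro (_ | i) hi
    · exact ⟨hGy, hT⟩
    · exact hstep i (Nat.lt_of_succ_lt_succ hi)

theorem ExitsUnsafelyIn.eq_zero_of_not_guard {n : ℕ} {y : X}
    (h : ExitsUnsafelyIn G A T n y) (hG : ¬ G y) : n = 0 ∧ ¬ A y := by
  cases n with
  | zero => exact ⟨rfl, (exitsUnsafelyIn_zero.1 h).2⟩
  | succ n => exact absurd (exitsUnsafelyIn_succ.1 h).1 hG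

theorem exists_exitsUnsafelyIn_of_isDangerInvariant {D : X → Prop} {R : X → ℤ}
    (hDR : IsDangerInvariant I G A T D R) {y : X} (hy : D y) :
    ∃ n, ExitsUnsafelyIn G A T n y := by
  obtain ⟨-, hstep, hexit⟩ := hDR
  induction h : (R y).toNat using Nat.strong_induction_on generalizing y with
  | _ k ih =>
    by_cases hG : G y
    · obtain ⟨hpos, y', hT, hy', hlt⟩ := hstep y ⟨hy, hG⟩
      obtain ⟨n, hn⟩ := ih (R y').toNat (by omega) hy' rfl
      exact ⟨n + 1, exitsUnsafelyIn_succ.2 ⟨hG, y', hT, hn⟩⟩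
    · exact ⟨0, exitsUnsafelyIn_zero.2 ⟨hG, hexit y ⟨hy, hG⟩⟩⟩

theorem isDangerInvariant_of_exitsUnsafelyIn {n : ℕ} {x₀ : X} (hI : I x₀)
    (hx₀ : ExitsUnsafelyIn G A T n x₀) :
    IsDangerInvariant I G A T (fun y => ∃ n, ExitsUnsafelyIn G A T n y)
      (fun y => (sInf {n | ExitsUnsafelyIn G A T n y} : ℕ)) := by
  refine ⟨⟨x₀, hI, n, hx₀⟩, ?_, fun y ⟨⟨m, hm⟩, hG⟩ => (hm.eq_zero_of_not_guard hG).2⟩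
  rintro y ⟨hy, hG⟩
  dsimp only
  have hmin : ExitsUnsafelyIn G A T (sInf {n | ExitsUnsafelyIn G A T n y}) y := Nat.sInf_mem hy
  obtain ⟨k, hk⟩ : ∃ k, sInf {n | ExitsUnsafelyIn G A T n y} = k + 1 := by
    rcases hm : sInf {n | ExitsUnsafelyIn G A T n y} with _ | k
    · rw [hm] at hmin
      exact absurd hG (exitsUnsafelyIn_zero.1 hmin).1
    · exact ⟨k, rfl⟩
  rw [hk] at hmin ⊢
  obtain ⟨-, y', hT, hy'⟩ := exitsUnsafelyIn_succ.1 hmin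
  have hshorter : sInf {n | ExitsUnsafelyIn G A T n y'} ≤ k := Nat.sInf_le hy'
  exact ⟨by positivity, y', hT, ⟨k, hy'⟩, by omega⟩

end DangerInvariant

theorem danger_invariant_iff_unsafe {X : Type*} (I G A : X → Prop) (T : X → X → Prop) :
    (∃ (n : ℕ) (x : ℕ → X), I (x 0) ∧ (∀ i < n, G (x i) ∧ T (x i) (x (i+1))) ∧
      ¬ G (x n) ∧ ¬ A (x n)) ↔
    (∃ (D : X → Prop) (R : X → ℤ),
      (∃ x₀, I x₀ ∧ D x₀) ∧
      (∀ x, D x ∧ G x → R x > 0 ∧ ∃ x', T x x' ∧ D x' ∧ R x' < R x) ∧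
      (∀ x, D x ∧ ¬ G x → ¬ A x)) := by
  have hunsafe : (∃ (n : ℕ) (x : ℕ → X), I (x 0) ∧ (∀ i < n, G (x i) ∧ T (x i) (x (i+1))) ∧
      ¬ G (x n) ∧ ¬ A (x n)) ↔ ∃ x₀, I x₀ ∧ ∃ n, ExitsUnsafelyIn G A T n x₀ :=
    ⟨fun ⟨n, x, hI, hrun⟩ => ⟨x 0, hI, n, x, rfl, hrun⟩,
      fun ⟨_, hI, n, x, hx, hrun⟩ => ⟨n, x, hx ▸ hI, hrun⟩⟩
  rw [hunsafe]
  change _ ↔ ∃ D R, IsDangerInvariant I G A T D R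
  constructor
  · rintro ⟨x₀, hI, n, hx₀⟩
    exact ⟨_, _, isDangerInvariant_of_exitsUnsafelyIn hI hx₀⟩
  · rintro ⟨D, R, hDR⟩
    obtain ⟨x₀, hI, hx₀⟩ := hDR.1
    exact ⟨x₀, hI, exists_exitsUnsafelyIn_of_isDangerInvariant hDR hx₀⟩
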